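/- arXiv:2512.14022 — 2 statements merged into one kernel-verified Lean document; each statement's English description precedes it below -/
import Mathlib

section
/- For α > 0 and σ > 0, the map Λ ↦ E_{p_Λ}[ln(1 + α Y²/σ²)] = Z(Λ)⁻¹ ∫_ℝ (1 + α y²/σ²)^{−Λ} ln(1 + α y²/σ²) dy is strictly decreasing on (1/2, ∞). Consequently, for a given feasible payload value C the Lagrange multiplier Λ satisfying the constraint E_{p_Λ}[ln(1 + α Y²/σ²)] = C is unique. -/
open MeasureTheory Real

/-- `(1 + y²)^(-s)` is integrable for `s > 1/2`. -/
lemma aux_integrable_std {s : ℝ} (hs : 1 / 2 < s) :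
    Integrable (fun y : ℝ => (1 + y ^ 2) ^ (-s)) := by
  have h1 : ((Module.finrank ℝ ℝ : ℝ)) < 2 * s := by
    simp [Module.finrank_self]; linarith
  have h := integrable_rpow_neg_one_add_norm_sq (E := ℝ) (μ := volume) h1
  have he : -(2 * s) / 2 = -s := by ring
  simpa [Real.norm_eq_abs, sq_abs, he] using h

/-- `(1 + c y²)^(-s)` is integrable for `c > 0`, `s > 1/2`. -/
lemma aux_integrable {c s : ℝ} (hc : 0 < c) (hs : 1 / 2 < s) :
    Integrable (fun y : ℝ => (1 + c * y ^ 2) ^ (-s)) := by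
  set m : ℝ := min 1 c with hm
  have hm0 : 0 < m := lt_min one_pos hc
  have hcont : Continuous fun y : ℝ => (1 + c * y ^ 2) ^ (-s) := by
    apply Continuous.rpow_const (by continuity)
    intro y; left; positivity
  refine ((aux_integrable_std hs).const_mul (m ^ (-s))).mono'
    hcont.aestronglyMeasurable (Filter.Eventually.of_forall fun y => ?_)
  have hb : (0:ℝ) < 1 + c * y ^ 2 := by positivity
  rw [Real.norm_eq_abs, abs_of_nonneg (Real.rpow_nonneg hb.le _)]
  have hle : m * (1 + y ^ 2) ≤ 1 + c * y ^ 2 := by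
    have h1 : m ≤ 1 := min_le_left _ _
    have h2 : m ≤ c := min_le_right _ _
    nlinarith [sq_nonneg y]
  calc (1 + c * y ^ 2) ^ (-s) ≤ (m * (1 + y ^ 2)) ^ (-s) :=
        Real.rpow_le_rpow_of_nonpos (by positivity) hle (by linarith)
    _ = m ^ (-s) * (1 + y ^ 2) ^ (-s) := Real.mul_rpow hm0.le (by positivity)

/-- `log x ≤ x^ε / ε` for `x ≥ 1`, `ε > 0`. -/
lemma aux_log_le {x ε : ℝ} (hx : 1 ≤ x) (hε : 0 < ε) : Real.log x ≤ x ^ ε / ε := by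
  have hx0 : 0 < x := lt_of_lt_of_le one_pos hx
  have h1 : Real.log (x ^ ε) ≤ x ^ ε - 1 := Real.log_le_sub_one_of_pos (by positivity)
  rw [Real.log_rpow hx0] at h1
  have hxε : (0:ℝ) ≤ x ^ ε := by positivity
  rw [le_div_iff₀ hε]
  nlinarith [h1]

/-- the log-weighted density is integrable. -/
lemma aux_integrable_log {c s : ℝ} (hc : 0 < c) (hs : 1 / 2 < s) :
    Integrable (fun y : ℝ => (1 + c * y ^ 2) ^ (-s) * Real.log (1 + c * y ^ 2)) := by
  set ε : ℝ := (s - 1 / 2) / 2 with hεdef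
  have hε : 0 < ε := by simp [hεdef]; linarith
  have hs' : 1 / 2 < s - ε := by simp [hεdef]; linarith
  have hcont : Continuous fun y : ℝ => (1 + c * y ^ 2) ^ (-s) * Real.log (1 + c * y ^ 2) := by
    apply Continuous.mul
    · apply Continuous.rpow_const (by continuity); intro y; left; positivity
    · apply Continuous.log (by continuity); intro y; positivity
  refine ((aux_integrable hc hs').const_mul ε⁻¹).mono'
    hcont.aestronglyMeasurable (Filter.Eventually.of_forall fun y => ?_)
  have hb1 : (1:ℝ) ≤ 1 + c * y ^ 2 := by nlinarith [sq_nonneg y]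
  have hb : (0:ℝ) < 1 + c * y ^ 2 := by positivity
  rw [Real.norm_eq_abs, abs_of_nonneg (mul_nonneg (Real.rpow_nonneg hb.le _) (Real.log_nonneg hb1))]
  calc (1 + c * y ^ 2) ^ (-s) * Real.log (1 + c * y ^ 2)
      ≤ (1 + c * y ^ 2) ^ (-s) * ((1 + c * y ^ 2) ^ ε / ε) :=
        mul_le_mul_of_nonneg_left (aux_log_le hb1 hε) (Real.rpow_nonneg hb.le _)
    _ = ε⁻¹ * ((1 + c * y ^ 2) ^ (-s) * (1 + c * y ^ 2) ^ ε) := by ring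
    _ = ε⁻¹ * (1 + c * y ^ 2) ^ (-(s - ε)) := by
        rw [show -(s - ε) = -s + ε by ring, Real.rpow_add hb]

/-- positivity of the normalizing integral. -/
lemma aux_integral_pos {c s : ℝ} (hc : 0 < c) (hs : 1 / 2 < s) :
    0 < ∫ y : ℝ, (1 + c * y ^ 2) ^ (-s) := by
  rw [integral_pos_iff_support_of_nonneg_ae
    (Filter.Eventually.of_forall fun y => Real.rpow_nonneg (by positivity) _)
    (aux_integrable hc hs)]
  have hsupp : Function.support (fun y : ℝ => (1 + c * y ^ 2) ^ (-s)) = Set.univ := by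
    ext y
    simp only [Function.mem_support, Set.mem_univ, iff_true]
    have : (0:ℝ) < (1 + c * y ^ 2) ^ (-s) := Real.rpow_pos_of_pos (by positivity) _
    exact ne_of_gt this
  rw [hsupp]
  simp [Real.volume_univ]

/-- For `α > 0` and `σ > 0`, the map
`Λ ↦ E_{p_Λ}[ln(1 + α Y²/σ²)] = Z(Λ)⁻¹ ∫ (1 + α y²/σ²)^(−Λ) ln(1 + α y²/σ²) dy`
is strictly decreasing on `(1/2, ∞)`; consequently, the Lagrange multiplier
`Λ` achieving a given payload value `C` is unique. -/
theorem average_payload_strictAnti_and_multiplier_unique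
    (α σ : ℝ) (hα : 0 < α) (hσ : 0 < σ)
    (F : ℝ → ℝ)
    (hF : ∀ Λ : ℝ, F Λ = (∫ y : ℝ, (1 + α * y ^ 2 / σ ^ 2) ^ (-Λ))⁻¹
        * ∫ y : ℝ, (1 + α * y ^ 2 / σ ^ 2) ^ (-Λ) * Real.log (1 + α * y ^ 2 / σ ^ 2)) :
    StrictAntiOn F (Set.Ioi (1 / 2 : ℝ)) ∧
    ∀ C : ℝ, ∀ Λ₁ ∈ Set.Ioi (1 / 2 : ℝ), ∀ Λ₂ ∈ Set.Ioi (1 / 2 : ℝ),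
      F Λ₁ = C → F Λ₂ = C → Λ₁ = Λ₂ := by
  set c : ℝ := α / σ ^ 2 with hcdef
  have hc : 0 < c := by positivity
  have hrw : ∀ y : ℝ, 1 + α * y ^ 2 / σ ^ 2 = 1 + c * y ^ 2 := fun y => by
    rw [hcdef]; ring
  set w : ℝ → ℝ → ℝ := fun Λ y => (1 + c * y ^ 2) ^ (-Λ) with hwdef
  set g : ℝ → ℝ := fun y => Real.log (1 + c * y ^ 2) with hgdef
  have hF' : ∀ Λ : ℝ, F Λ = (∫ y : ℝ, w Λ y)⁻¹ * ∫ y : ℝ, w Λ y * g y := by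
    intro Λ
    rw [hF Λ]
    simp only [hrw, hwdef, hgdef]
  have hb1 : ∀ y : ℝ, (1:ℝ) ≤ 1 + c * y ^ 2 := fun y => by nlinarith [sq_nonneg y]
  have hb0 : ∀ y : ℝ, (0:ℝ) < 1 + c * y ^ 2 := fun y => by positivity
  have hgnn : ∀ y : ℝ, 0 ≤ g y := fun y => Real.log_nonneg (hb1 y)
  -- w as exponential
  have hwe : ∀ Λ y, w Λ y = Real.exp (g y * (-Λ)) := fun Λ y => by
    rw [hwdef, hgdef]
    exact Real.rpow_def_of_pos (hb0 y) _
  have hSA : StrictAntiOn F (Set.Ioi (1 / 2 : ℝ)) := by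
    intro Λ₁ hΛ₁ Λ₂ hΛ₂ hlt
    simp only [Set.mem_Ioi] at hΛ₁ hΛ₂
    have hIw₁ : Integrable (w Λ₁) := aux_integrable hc hΛ₁
    have hIw₂ : Integrable (w Λ₂) := aux_integrable hc hΛ₂
    have hIg₁ : Integrable (fun y => w Λ₁ y * g y) := aux_integrable_log hc hΛ₁
    have hIg₂ : Integrable (fun y => w Λ₂ y * g y) := aux_integrable_log hc hΛ₂
    set I₁ := ∫ y : ℝ, w Λ₁ y with hI₁
    set I₂ := ∫ y : ℝ, w Λ₂ y with hI₂
    set J₁ := ∫ y : ℝ, w Λ₁ y * g y with hJ₁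
    set J₂ := ∫ y : ℝ, w Λ₂ y * g y with hJ₂
    have hI₁pos : 0 < I₁ := aux_integral_pos hc hΛ₁
    have hI₂pos : 0 < I₂ := aux_integral_pos hc hΛ₂
    -- the symmetrized correlation integrand
    set h : ℝ × ℝ → ℝ :=
      fun p => (g p.1 - g p.2) * (w Λ₁ p.1 * w Λ₂ p.2 - w Λ₂ p.1 * w Λ₁ p.2) with hhdef
    -- pointwise nonnegativity
    have hsign : ∀ x y : ℝ, g x < g y →
        w Λ₁ x * w Λ₂ y - w Λ₂ x * w Λ₁ y < 0 := by
      intro x y hxy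
      rw [hwe, hwe, hwe, hwe, ← Real.exp_add, ← Real.exp_add, sub_neg]
      apply Real.exp_lt_exp.mpr
      nlinarith
    have hnn : ∀ p : ℝ × ℝ, 0 ≤ h p := by
      intro ⟨x, y⟩
      rcases lt_trichotomy (g x) (g y) with hxy | hxy | hxy
      · exact le_of_lt (mul_pos_of_neg_of_neg (by simpa using sub_neg.mpr hxy)
          (hsign x y hxy))
      · simp [hhdef, hxy]
      · have h2 : w Λ₁ y * w Λ₂ x - w Λ₂ y * w Λ₁ x < 0 := hsign y x hxy
        have : 0 < w Λ₁ x * w Λ₂ y - w Λ₂ x * w Λ₁ y := by nlinarith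
        exact le_of_lt (mul_pos (by simpa using sub_pos.mpr hxy) this)
    -- integrability of h over the product
    have hint : Integrable h (volume.prod volume) := by
      have e1 : Integrable (fun p : ℝ × ℝ => (w Λ₁ p.1 * g p.1) * w Λ₂ p.2)
          (volume.prod volume) := (hIg₁.mul_prod hIw₂)
      have e2 : Integrable (fun p : ℝ × ℝ => (w Λ₂ p.1 * g p.1) * w Λ₁ p.2)
          (volume.prod volume) := (hIg₂.mul_prod hIw₁)
      have e3 : Integrable (fun p : ℝ × ℝ => w Λ₁ p.1 * (w Λ₂ p.2 * g p.2))
          (volume.prod volume) := (hIw₁.mul_prod hIg₂)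
      have e4 : Integrable (fun p : ℝ × ℝ => w Λ₂ p.1 * (w Λ₁ p.2 * g p.2))
          (volume.prod volume) := (hIw₂.mul_prod hIg₁)
      have : h = fun p : ℝ × ℝ => ((w Λ₁ p.1 * g p.1) * w Λ₂ p.2
          - (w Λ₂ p.1 * g p.1) * w Λ₁ p.2) - (w Λ₁ p.1 * (w Λ₂ p.2 * g p.2)
          - w Λ₂ p.1 * (w Λ₁ p.2 * g p.2)) := by
        funext p; simp only [hhdef]; ring
      rw [this]
      exact (e1.sub e2).sub (e3.sub e4)
    -- value of the double integral
    have hval : ∫ p : ℝ × ℝ, h p ∂(volume.prod volume) = 2 * (J₁ * I₂ - J₂ * I₁) := by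
      have e1 : Integrable (fun p : ℝ × ℝ => (w Λ₁ p.1 * g p.1) * w Λ₂ p.2)
          (volume.prod volume) := (hIg₁.mul_prod hIw₂)
      have e2 : Integrable (fun p : ℝ × ℝ => (w Λ₂ p.1 * g p.1) * w Λ₁ p.2)
          (volume.prod volume) := (hIg₂.mul_prod hIw₁)
      have e3 : Integrable (fun p : ℝ × ℝ => w Λ₁ p.1 * (w Λ₂ p.2 * g p.2))
          (volume.prod volume) := (hIw₁.mul_prod hIg₂)
      have e4 : Integrable (fun p : ℝ × ℝ => w Λ₂ p.1 * (w Λ₁ p.2 * g p.2))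
          (volume.prod volume) := (hIw₂.mul_prod hIg₁)
      have e12 : Integrable (fun p : ℝ × ℝ => (w Λ₁ p.1 * g p.1) * w Λ₂ p.2
          - (w Λ₂ p.1 * g p.1) * w Λ₁ p.2) (volume.prod volume) := e1.sub e2
      have e34 : Integrable (fun p : ℝ × ℝ => w Λ₁ p.1 * (w Λ₂ p.2 * g p.2)
          - w Λ₂ p.1 * (w Λ₁ p.2 * g p.2)) (volume.prod volume) := e3.sub e4
      have hrw2 : ∀ p : ℝ × ℝ, h p = ((w Λ₁ p.1 * g p.1) * w Λ₂ p.2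
          - (w Λ₂ p.1 * g p.1) * w Λ₁ p.2) - (w Λ₁ p.1 * (w Λ₂ p.2 * g p.2)
          - w Λ₂ p.1 * (w Λ₁ p.2 * g p.2)) := by
        intro p; simp only [hhdef]; ring
      calc ∫ p : ℝ × ℝ, h p ∂(volume.prod volume)
          = ∫ p : ℝ × ℝ, (((w Λ₁ p.1 * g p.1) * w Λ₂ p.2
            - (w Λ₂ p.1 * g p.1) * w Λ₁ p.2) - (w Λ₁ p.1 * (w Λ₂ p.2 * g p.2)
            - w Λ₂ p.1 * (w Λ₁ p.2 * g p.2))) ∂(volume.prod volume) := by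
            exact integral_congr_ae (Filter.Eventually.of_forall hrw2)
        _ = 2 * (J₁ * I₂ - J₂ * I₁) := by
            have q1 : ∫ (a : ℝ × ℝ), w Λ₁ a.1 * g a.1 * w Λ₂ a.2 ∂(volume.prod volume)
                = (∫ x : ℝ, w Λ₁ x * g x) * ∫ y : ℝ, w Λ₂ y :=
              integral_prod_mul (fun x : ℝ => w Λ₁ x * g x) (w Λ₂)
            have q2 : ∫ (a : ℝ × ℝ), w Λ₂ a.1 * g a.1 * w Λ₁ a.2 ∂(volume.prod volume)
                = (∫ x : ℝ, w Λ₂ x * g x) * ∫ y : ℝ, w Λ₁ y :=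
              integral_prod_mul (fun x : ℝ => w Λ₂ x * g x) (w Λ₁)
            have q3 : ∫ (a : ℝ × ℝ), w Λ₁ a.1 * (w Λ₂ a.2 * g a.2) ∂(volume.prod volume)
                = (∫ x : ℝ, w Λ₁ x) * ∫ y : ℝ, w Λ₂ y * g y :=
              integral_prod_mul (w Λ₁) (fun y : ℝ => w Λ₂ y * g y)
            have q4 : ∫ (a : ℝ × ℝ), w Λ₂ a.1 * (w Λ₁ a.2 * g a.2) ∂(volume.prod volume)
                = (∫ x : ℝ, w Λ₂ x) * ∫ y : ℝ, w Λ₁ y * g y :=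
              integral_prod_mul (w Λ₂) (fun y : ℝ => w Λ₁ y * g y)
            rw [integral_sub e12 e34, integral_sub e1 e2, integral_sub e3 e4,
              q1, q2, q3, q4]
            simp only [← hI₁, ← hI₂, ← hJ₁, ← hJ₂]
            ring
    -- positivity of the double integral
    have hpos : 0 < ∫ p : ℝ × ℝ, h p ∂(volume.prod volume) := by
      rw [integral_pos_iff_support_of_nonneg_ae (Filter.Eventually.of_forall hnn) hint]
      have hsub : (Set.Ioo (0:ℝ) 1) ×ˢ (Set.Ioo (2:ℝ) 3) ⊆ Function.support h := by
        rintro ⟨x, y⟩ ⟨hx, hy⟩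
        simp only [Set.mem_Ioo] at hx hy
        have hgxy : g x < g y := by
          rw [hgdef]
          apply Real.log_lt_log (hb0 x)
          have : x ^ 2 < y ^ 2 := by nlinarith
          nlinarith
        have h2 := hsign x y hgxy
        have : 0 < h (x, y) :=
          mul_pos_of_neg_of_neg (by simpa using sub_neg.mpr hgxy) h2
        exact Function.mem_support.mpr (ne_of_gt this)
      calc (0:ENNReal) < (volume.prod volume) ((Set.Ioo (0:ℝ) 1) ×ˢ (Set.Ioo (2:ℝ) 3)) := by
            rw [Measure.prod_prod, Real.volume_Ioo, Real.volume_Ioo]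
            norm_num
        _ ≤ (volume.prod volume) (Function.support h) := measure_mono hsub
    rw [hval] at hpos
    have hkey : J₂ * I₁ < J₁ * I₂ := by linarith
    rw [hF' Λ₁, hF' Λ₂, ← hI₁, ← hI₂, ← hJ₁, ← hJ₂, inv_mul_eq_div, inv_mul_eq_div]
    rw [div_lt_div_iff₀ hI₂pos hI₁pos]
    linarith [hkey]
  refine ⟨hSA, fun C Λ₁ hΛ₁ Λ₂ hΛ₂ h1 h2 => hSA.injOn hΛ₁ hΛ₂ (by rw [h1, h2])⟩
end

section
/- Let α > 0, σ > 0 and Λ > 1/2, and suppose the Lagrange multiplier Λ is such that the scaled Student's t density p_Λ satisfies the payload constraint ∫_ℝ p_Λ(y) ln(1 + α y²/σ²) dy = C. Then p_Λ solves the constrained maximum-entropy problem: for every probability density q on ℝ with ∫_ℝ q(y) ln(1 + α y²/σ²) dy = C and well-defined differential entropy, h(q) ≤ h(p_Λ), with equality if and only if q = p_Λ almost everywhere. Hence the unconstrained Lagrangian minimization of Eq. (9) and the constrained maximum-entropy problem of Eq. (13) have the same (unique) solution. -/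
open MeasureTheory Real

lemma aux_integrable_rpow {c Λ : ℝ} (hc : 0 < c) (hΛ : 1/2 < Λ) :
    Integrable (fun y : ℝ => (1 + c * y ^ 2) ^ (-Λ)) := by
  have hbase : ∀ y : ℝ, 0 < 1 + c * y ^ 2 := fun y => by positivity
  have hcont : Continuous fun y : ℝ => (1 + c * y ^ 2) ^ (-Λ) := by
    apply Continuous.rpow_const (by continuity)
    exact fun y => Or.inl (hbase y).ne'
  have hIoi : IntegrableOn (fun y : ℝ => (1 + c * y ^ 2) ^ (-Λ)) (Set.Ioi 1) := by
    have hint : IntegrableOn (fun y : ℝ => c ^ (-Λ) * y ^ (-(2 * Λ))) (Set.Ioi 1) :=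
      (integrableOn_Ioi_rpow_of_lt (by linarith) one_pos).const_mul _
    refine Integrable.mono' hint hcont.aestronglyMeasurable.restrict ?_
    filter_upwards [ae_restrict_mem measurableSet_Ioi] with y hy
    have hy0 : (0:ℝ) < y := lt_trans one_pos hy
    have h1 : (1 + c * y ^ 2) ^ (-Λ) ≤ (c * y ^ 2) ^ (-Λ) :=
      rpow_le_rpow_of_nonpos (by positivity) (by nlinarith) (by linarith)
    have h2 : (c * y ^ 2 : ℝ) ^ (-Λ) = c ^ (-Λ) * y ^ (-(2 * Λ)) := by
      rw [Real.mul_rpow hc.le (by positivity), ← Real.rpow_natCast y 2,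
        ← Real.rpow_mul hy0.le]
      norm_num
    rw [Real.norm_eq_abs, abs_of_nonneg (Real.rpow_nonneg (hbase y).le _)]
    rw [← h2]; exact h1
  have hIio : IntegrableOn (fun y : ℝ => (1 + c * y ^ 2) ^ (-Λ)) (Set.Iio (-1)) := by
    rw [← (Measure.measurePreserving_neg (volume : Measure ℝ)).integrableOn_comp_preimage
      (Homeomorph.neg ℝ).measurableEmbedding]
    simpa only [Function.comp_def, Set.neg_preimage, Set.neg_Iio, neg_neg, neg_sq] using hIoi
  have hIcc : IntegrableOn (fun y : ℝ => (1 + c * y ^ 2) ^ (-Λ)) (Set.Icc (-1) 1) :=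
    hcont.integrableOn_Icc
  have huniv : (Set.univ : Set ℝ) = Set.Iio (-1) ∪ Set.Icc (-1) 1 ∪ Set.Ioi 1 := by
    ext x
    simp only [Set.mem_univ, Set.mem_union, Set.mem_Iio, Set.mem_Icc, Set.mem_Ioi, true_iff]
    rcases lt_trichotomy x (-1) with h | h | h
    · exact Or.inl (Or.inl h)
    · exact Or.inl (Or.inr ⟨le_of_eq h.symm, by linarith⟩)
    · rcases le_or_gt x 1 with h2 | h2
      · exact Or.inl (Or.inr ⟨h.le, h2⟩)
      · exact Or.inr h2
  rw [← integrableOn_univ, huniv]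
  exact (hIio.union hIcc).union hIoi

lemma aux_integrable_rpow_log {c Λ : ℝ} (hc : 0 < c) (hΛ : 1/2 < Λ) :
    Integrable (fun y : ℝ => (1 + c * y ^ 2) ^ (-Λ) * Real.log (1 + c * y ^ 2)) := by
  have hbase : ∀ y : ℝ, 0 < 1 + c * y ^ 2 := fun y => by positivity
  set ε : ℝ := (Λ - 1/2) / 2 with hεdef
  have hε0 : 0 < ε := by rw [hεdef]; linarith
  have hΛ' : 1/2 < Λ - ε := by rw [hεdef]; linarith
  have hcont : Continuous fun y : ℝ => (1 + c * y ^ 2) ^ (-Λ) * Real.log (1 + c * y ^ 2) := by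
    apply Continuous.mul
    · exact Continuous.rpow_const (by continuity) fun y => Or.inl (hbase y).ne'
    · exact Continuous.log (by continuity) fun y => (hbase y).ne'
  have hint : Integrable (fun y : ℝ => ε⁻¹ * (1 + c * y ^ 2) ^ (-(Λ - ε))) :=
    (aux_integrable_rpow hc hΛ').const_mul _
  refine hint.mono' hcont.aestronglyMeasurable (Filter.Eventually.of_forall fun y => ?_)
  have hb1 : (1:ℝ) ≤ 1 + c * y ^ 2 := by nlinarith [sq_nonneg y]
  have hlog0 : 0 ≤ Real.log (1 + c * y ^ 2) := Real.log_nonneg hb1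
  have hrp0 : 0 ≤ (1 + c * y ^ 2) ^ (-Λ) := Real.rpow_nonneg (hbase y).le _
  rw [Real.norm_eq_abs, abs_of_nonneg (mul_nonneg hrp0 hlog0)]
  have hlog : Real.log (1 + c * y ^ 2) ≤ (1 + c * y ^ 2) ^ ε / ε :=
    Real.log_le_rpow_div (hbase y).le hε0
  have hsplit : (1 + c * y ^ 2) ^ (-(Λ - ε)) = (1 + c * y ^ 2) ^ (-Λ) * (1 + c * y ^ 2) ^ ε := by
    rw [← Real.rpow_add (hbase y)]; ring_nf
  calc (1 + c * y ^ 2) ^ (-Λ) * Real.log (1 + c * y ^ 2)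
      ≤ (1 + c * y ^ 2) ^ (-Λ) * ((1 + c * y ^ 2) ^ ε / ε) := by
        exact mul_le_mul_of_nonneg_left hlog hrp0
    _ = ε⁻¹ * (1 + c * y ^ 2) ^ (-(Λ - ε)) := by rw [hsplit]; field_simp

/-- Section IV-C: if the Lagrange multiplier `Λ > 1/2` is chosen so that the
scaled Student's t density `p_Λ(y) = Z(Λ)⁻¹ (1 + α y²/σ²)^(−Λ)` meets the
payload constraint `∫ p_Λ(y) ln(1 + α y²/σ²) dy = C`, then `p_Λ` solves the
constrained maximum-entropy problem: every probability density `q` with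
payload `C` and well-defined differential entropy satisfies
`h(q) ≤ h(p_Λ)`, with equality iff `q = p_Λ` almost everywhere. -/
theorem scaled_student_t_solves_constrained_max_entropy
    (α σ Λ C : ℝ) (hα : 0 < α) (hσ : 0 < σ) (hΛ : 1 / 2 < Λ)
    (Z : ℝ) (hZ : Z = ∫ y : ℝ, (1 + α * y ^ 2 / σ ^ 2) ^ (-Λ))
    (p : ℝ → ℝ) (hp : ∀ y, p y = Z⁻¹ * (1 + α * y ^ 2 / σ ^ 2) ^ (-Λ))
    (hpC : ∫ y : ℝ, p y * Real.log (1 + α * y ^ 2 / σ ^ 2) = C) :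
    ∀ q : ℝ → ℝ, (∀ y, 0 ≤ q y) → Integrable q → (∫ y : ℝ, q y = 1) →
      Integrable (fun y => q y * Real.log (1 + α * y ^ 2 / σ ^ 2)) →
      (∫ y : ℝ, q y * Real.log (1 + α * y ^ 2 / σ ^ 2) = C) →
      Integrable (fun y => q y * Real.log (q y)) →
      ((- ∫ y : ℝ, q y * Real.log (q y)) ≤ - ∫ y : ℝ, p y * Real.log (p y)) ∧
      (((- ∫ y : ℝ, q y * Real.log (q y)) = - ∫ y : ℝ, p y * Real.log (p y)) ↔
        q =ᵐ[volume] p) := by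
  intro q hq0 hqint hq1 hqlogb_int hqC hqlogq_int
  have hc : 0 < α / σ ^ 2 := by positivity
  have hbeq : ∀ y : ℝ, 1 + α * y ^ 2 / σ ^ 2 = 1 + (α / σ ^ 2) * y ^ 2 := fun y => by ring
  simp only [hbeq] at hZ hp hpC hqlogb_int hqC
  set c : ℝ := α / σ ^ 2
  have hΛ' : 1/2 < Λ := by linarith
  have hbase : ∀ y : ℝ, 0 < 1 + c * y ^ 2 := fun y => by positivity
  have hgint : Integrable (fun y : ℝ => (1 + c * y ^ 2) ^ (-Λ)) := aux_integrable_rpow hc hΛ'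
  have hglog : Integrable (fun y : ℝ => (1 + c * y ^ 2) ^ (-Λ) * Real.log (1 + c * y ^ 2)) :=
    aux_integrable_rpow_log hc hΛ'
  have hZ0 : 0 < Z := by
    rw [hZ, integral_pos_iff_support_of_nonneg_ae
      (Filter.Eventually.of_forall fun y => Real.rpow_nonneg (hbase y).le _) hgint]
    have hsupp : Function.support (fun y : ℝ => (1 + c * y ^ 2) ^ (-Λ)) = Set.univ :=
      Set.eq_univ_iff_forall.mpr fun y => (Real.rpow_pos_of_pos (hbase y) _).ne'
    rw [hsupp, Real.volume_univ]
    exact ENNReal.zero_lt_top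
  have hppos : ∀ y, 0 < p y := fun y => by
    rw [hp y]; exact mul_pos (inv_pos.mpr hZ0) (Real.rpow_pos_of_pos (hbase y) _)
  have hpfun : p = fun y => Z⁻¹ * (1 + c * y ^ 2) ^ (-Λ) := funext hp
  have hpint : Integrable p := by rw [hpfun]; exact hgint.const_mul _
  have hp1 : ∫ y : ℝ, p y = 1 := by
    rw [hpfun, integral_const_mul, ← hZ, inv_mul_cancel₀ hZ0.ne']
  have hlogp : ∀ y, Real.log (p y) = Real.log Z⁻¹ + (-Λ) * Real.log (1 + c * y ^ 2) :=
    fun y => by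
      rw [hp y, Real.log_mul (inv_ne_zero hZ0.ne') (Real.rpow_pos_of_pos (hbase y) _).ne',
        Real.log_rpow (hbase y)]
  have hplogb_int : Integrable (fun y => p y * Real.log (1 + c * y ^ 2)) := by
    simp only [hp, mul_assoc]
    exact hglog.const_mul _
  have hpeq : (fun y => p y * Real.log (p y))
      = fun y => Real.log Z⁻¹ * p y + (-Λ) * (p y * Real.log (1 + c * y ^ 2)) := by
    funext y; rw [hlogp y]; ring
  have hplogp_int : Integrable (fun y => p y * Real.log (p y)) := by
    rw [hpeq]; exact (hpint.const_mul _).add (hplogb_int.const_mul _)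
  have Ip : ∫ y : ℝ, p y * Real.log (p y) = Real.log Z⁻¹ + (-Λ) * C := by
    rw [hpeq, integral_add (hpint.const_mul _) (hplogb_int.const_mul _),
      integral_const_mul, integral_const_mul, hp1, hpC]; ring
  have hqeq : (fun y => q y * Real.log (p y))
      = fun y => Real.log Z⁻¹ * q y + (-Λ) * (q y * Real.log (1 + c * y ^ 2)) := by
    funext y; rw [hlogp y]; ring
  have hqlogp_int : Integrable (fun y => q y * Real.log (p y)) := by
    rw [hqeq]; exact (hqint.const_mul _).add (hqlogb_int.const_mul _)
  have Iq : ∫ y : ℝ, q y * Real.log (p y) = Real.log Z⁻¹ + (-Λ) * C := by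
    rw [hqeq, integral_add (hqint.const_mul _) (hqlogb_int.const_mul _),
      integral_const_mul, integral_const_mul, hq1, hqC]; ring
  have key : ∫ y : ℝ, q y * Real.log (p y) = ∫ y : ℝ, p y * Real.log (p y) := by
    rw [Iq, Ip]
  set φ : ℝ → ℝ :=
    fun y => p y - q y - (q y * Real.log (p y) - q y * Real.log (q y)) with hφdef
  have hφint : Integrable φ := (hpint.sub hqint).sub (hqlogp_int.sub hqlogq_int)
  have hφnn : ∀ y, 0 ≤ φ y := by
    intro y
    rcases eq_or_lt_of_le (hq0 y) with h | h
    · simp only [hφdef, ← h, zero_mul, sub_zero, mul_comm]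
      simpa using (hppos y).le
    · have hlog : Real.log (p y / q y) ≤ p y / q y - 1 :=
        Real.log_le_sub_one_of_pos (div_pos (hppos y) h)
      have hdiv : Real.log (p y / q y) = Real.log (p y) - Real.log (q y) :=
        Real.log_div (hppos y).ne' h.ne'
      have h2 : q y * (Real.log (p y) - Real.log (q y)) ≤ q y * (p y / q y - 1) :=
        mul_le_mul_of_nonneg_left (hdiv ▸ hlog) h.le
      have h3 : q y * (p y / q y - 1) = p y - q y := by field_simp
      rw [mul_sub] at h2
      simp only [hφdef]
      linarith
  have hφeq : ∫ y : ℝ, φ y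
      = (∫ y : ℝ, q y * Real.log (q y)) - ∫ y : ℝ, p y * Real.log (p y) := by
    simp only [hφdef]
    have hA : Integrable (fun y => p y - q y) := hpint.sub hqint
    have hB : Integrable (fun y => q y * Real.log (p y) - q y * Real.log (q y)) :=
      hqlogp_int.sub hqlogq_int
    rw [integral_sub hA hB, integral_sub hpint hqint,
      integral_sub hqlogp_int hqlogq_int, hp1, hq1, key]
    ring
  have hφ0 : 0 ≤ ∫ y : ℝ, φ y := integral_nonneg hφnn
  constructor
  · linarith [hφeq, hφ0]
  constructor
  · intro heq
    have h0 : ∫ y : ℝ, φ y = 0 := by rw [hφeq]; linarith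
    have hae : φ =ᵐ[volume] 0 :=
      (integral_eq_zero_iff_of_nonneg hφnn hφint).mp h0
    filter_upwards [hae] with y hy
    have hy0 : φ y = 0 := hy
    rcases eq_or_lt_of_le (hq0 y) with h | h
    · exfalso
      have : φ y = p y := by simp [hφdef, ← h]
      rw [hy0] at this
      exact (hppos y).ne this
    · by_contra hne
      have hdivne : p y / q y ≠ 1 := fun h1 =>
        hne ((div_eq_one_iff_eq h.ne').mp h1).symm
      have hlog : Real.log (p y / q y) < p y / q y - 1 :=
        Real.log_lt_sub_one_of_pos (div_pos (hppos y) h) hdivne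
      have hdiv : Real.log (p y / q y) = Real.log (p y) - Real.log (q y) :=
        Real.log_div (hppos y).ne' h.ne'
      have h2 : q y * (Real.log (p y) - Real.log (q y)) < q y * (p y / q y - 1) :=
        (mul_lt_mul_iff_right₀ h).mpr (hdiv ▸ hlog)
      have h3 : q y * (p y / q y - 1) = p y - q y := by field_simp
      rw [mul_sub] at h2
      have : 0 < φ y := by simp only [hφdef]; linarith
      rw [hy0] at this
      exact lt_irrefl 0 this
  · intro hae
    have h1 : (fun y => q y * Real.log (q y)) =ᵐ[volume] fun y => p y * Real.log (p y) := by
      filter_upwards [hae] with y hy; rw [hy]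
    rw [integral_congr_ae h1]
end
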